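/- arXiv:1911.01592 — 2 statements merged into one kernel-verified Lean document; each statement's English description precedes it below -/
import Mathlib

section
/- Let ρ ≥ 1 be a real number, let b be a positive integer with b ≥ e^{3ρ}, let i ≥ 0 be an integer, and define k_i = b^i·(1 + i/(2b)) and k_{i+1} = b^{i+1}·(1 + (i+1)/(2b)). Then k_i + ∑_{j=1}^{b-1} (k_i·(b+1) − k_{i+1})/(b − j + 1) ≥ ρ·b^i + b^i/2. -/
/-- The key cost inequality in the inductive step of the lower-bound construction
for the (h,k)-server problem. -/
theorem phase_cost_inequality (ρ : ℝ) (hρ : 1 ≤ ρ) (b : ℕ) (hb : 0 < b)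
    (hbe : Real.exp (3 * ρ) ≤ (b : ℝ)) (i : ℕ)
    (ki ki1 : ℝ)
    (hki : ki = (b : ℝ) ^ i * (1 + (i : ℝ) / (2 * b)))
    (hki1 : ki1 = (b : ℝ) ^ (i + 1) * (1 + ((i : ℝ) + 1) / (2 * b))) :
    ki + ∑ j ∈ Finset.Icc 1 (b - 1), (ki * ((b : ℝ) + 1) - ki1) / ((b : ℝ) - j + 1)
      ≥ ρ * (b : ℝ) ^ i + (b : ℝ) ^ i / 2 := by
  have hbpos : (0:ℝ) < b := Nat.cast_pos.2 hb
  have hpow : (0:ℝ) < (b:ℝ)^i := pow_pos hbpos i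
  set c : ℝ := ki * ((b : ℝ) + 1) - ki1 with hcdef
  have hc : c = (b:ℝ)^i * (1/2 + (i:ℝ)/(2*b)) := by
    rw [hcdef, hki, hki1]
    field_simp
    ring
  -- reindex the sum
  have hS : ∑ j ∈ Finset.Icc 1 (b-1), ((b:ℝ) - j + 1)⁻¹
      = ∑ m ∈ Finset.Icc 2 b, (m:ℝ)⁻¹ := by
    apply Finset.sum_nbij' (fun j => b + 1 - j) (fun m => b + 1 - m)
    · intro j hj; simp only [Finset.mem_Icc] at *; omega
    · intro m hm; simp only [Finset.mem_Icc] at *; omega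
    · intro j hj; simp only [Finset.mem_Icc] at hj; omega
    · intro m hm; simp only [Finset.mem_Icc] at hm; omega
    · intro j hj
      simp only [Finset.mem_Icc] at hj
      have h1 : j ≤ b + 1 := by omega
      rw [Nat.cast_sub h1]
      push_cast
      ring_nf
  -- harmonic sum
  have hH : ∑ m ∈ Finset.Icc 1 b, (m:ℝ)⁻¹ = 1 + ∑ m ∈ Finset.Icc 2 b, (m:ℝ)⁻¹ := by
    have he : Finset.Icc 1 b = insert 1 (Finset.Icc 2 b) := by
      ext x; simp only [Finset.mem_Icc, Finset.mem_insert]; omega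
    rw [he, Finset.sum_insert (by simp)]
    norm_num
  have hharm : (harmonic b : ℝ) = ∑ m ∈ Finset.Icc 1 b, (m:ℝ)⁻¹ := by
    rw [harmonic_eq_sum_Icc]
    push_cast
    rfl
  have hlog : 3 * ρ ≤ Real.log b := (Real.le_log_iff_exp_le hbpos).2 hbe
  have hlog2 : Real.log b ≤ Real.log (b+1) := by
    apply Real.log_le_log hbpos; push_cast; linarith
  have hBH : Real.log ((b:ℝ)+1) ≤ (harmonic b : ℝ) := by
    have := log_add_one_le_harmonic b
    push_cast at this
    convert this using 2
  have hH3 : 3 * ρ ≤ ∑ m ∈ Finset.Icc 1 b, (m:ℝ)⁻¹ := by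
    rw [← hharm]; linarith
  -- rewrite main sum
  have hsum : ∑ j ∈ Finset.Icc 1 (b-1), c / ((b:ℝ) - j + 1)
      = c * ∑ m ∈ Finset.Icc 2 b, (m:ℝ)⁻¹ := by
    rw [← hS, Finset.mul_sum]
    simp_rw [div_eq_mul_inv]
  rw [hsum]
  set H : ℝ := ∑ m ∈ Finset.Icc 2 b, (m:ℝ)⁻¹ with hHdef
  have hH2 : 3 * ρ - 1 ≤ H := by
    have := hH3; rw [hH] at this; linarith
  have ht : (0:ℝ) ≤ (i:ℝ)/(2*b) := by positivity
  rw [hki, hc]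
  set t : ℝ := (i:ℝ)/(2*b)
  have key : (1 + t) + (1/2 + t) * H ≥ ρ + 1/2 := by
    nlinarith [mul_nonneg ht (by linarith : (0:ℝ) ≤ H - (3*ρ - 1))]
  nlinarith [mul_le_mul_of_nonneg_left key hpow.le]
end

section
/- Let G be a simple graph that is a tree (connected and acyclic), let r be a vertex of G, and let w be a walk in G starting at r. For every pair of adjacent vertices u, v with dist(r, u) + 1 = dist(r, v) (i.e., u is the parent of v with respect to the root r), the number of darts of w going from v to u is at most the number of darts of w going from u to v. -/
open Classical in
lemma tree_walk_key {V : Type*} [DecidableEq V] (G : SimpleGraph V) (u v : V)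
    (P : V → Prop)
    (hcross : ∀ a b, G.Adj a b → (P a ↔ P b) ∨ (a = u ∧ b = v) ∨ (a = v ∧ b = u))
    (hPu : ¬ P u) (hPv : P v) :
    ∀ {a b : V} (w : G.Walk a b),
      (w.darts.filter (fun d => d.fst = v ∧ d.snd = u)).length + (if P b then 1 else 0)
        ≤ (w.darts.filter (fun d => d.fst = u ∧ d.snd = v)).length + (if P a then 1 else 0) := by
  intro a b w
  induction w with
  | nil => exact le_refl _
  | @cons a c b h w ih =>
    have hne : u ≠ v := fun hh => hPu (hh ▸ hPv)
    simp only [SimpleGraph.Walk.darts_cons, List.filter_cons]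
    by_cases hU : a = u ∧ c = v
    · have hD : ¬ (a = v ∧ c = u) := by
        rintro ⟨h1, -⟩; exact hne (hU.1 ▸ h1)
      rw [if_pos (show decide ((⟨(a, c), h⟩ : G.Dart).fst = u ∧ (⟨(a, c), h⟩ : G.Dart).snd = v) = true from decide_eq_true hU),
        if_neg (show ¬ decide ((⟨(a, c), h⟩ : G.Dart).fst = v ∧ (⟨(a, c), h⟩ : G.Dart).snd = u) = true by simpa using hD)]
      simp only [List.length_cons]
      rw [if_neg (show ¬ P a by rw [hU.1]; exact hPu)]
      rw [if_pos (show P c by rw [hU.2]; exact hPv)] at ih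
      omega
    · by_cases hD : a = v ∧ c = u
      · rw [if_neg (show ¬ decide ((⟨(a, c), h⟩ : G.Dart).fst = u ∧ (⟨(a, c), h⟩ : G.Dart).snd = v) = true by simpa using hU),
          if_pos (show decide ((⟨(a, c), h⟩ : G.Dart).fst = v ∧ (⟨(a, c), h⟩ : G.Dart).snd = u) = true from decide_eq_true hD)]
        simp only [List.length_cons]
        rw [if_pos (show P a by rw [hD.1]; exact hPv)]
        rw [if_neg (show ¬ P c by rw [hD.2]; exact hPu)] at ih
        omega
      · rw [if_neg (show ¬ decide ((⟨(a, c), h⟩ : G.Dart).fst = u ∧ (⟨(a, c), h⟩ : G.Dart).snd = v) = true by simpa using hU),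
          if_neg (show ¬ decide ((⟨(a, c), h⟩ : G.Dart).fst = v ∧ (⟨(a, c), h⟩ : G.Dart).snd = u) = true by simpa using hD)]
        have hpc : P a ↔ P c := by
          rcases hcross a c h with hpc | h' | h'
          · exact hpc
          · exact absurd h' hU
          · exact absurd h' hD
        by_cases hpa : P a
        · rw [if_pos hpa]
          rw [if_pos (hpc.mp hpa)] at ih
          omega
        · rw [if_neg hpa]
          rw [if_neg (fun hh => hpa (hpc.mpr hh))] at ih
          omega

/-- In a tree rooted at `r`, along any walk starting at `r`, each edge is traversed
towards the root at most as many times as it is traversed away from the root. -/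
theorem tree_walk_down_le_up {V : Type*} [DecidableEq V] (G : SimpleGraph V)
    (hG : G.IsTree) (r x : V) (w : G.Walk r x)
    (u v : V) (huv : G.Adj u v) (hdist : G.dist r u + 1 = G.dist r v) :
    (w.darts.filter (fun d => d.fst = v ∧ d.snd = u)).length ≤
      (w.darts.filter (fun d => d.fst = u ∧ d.snd = v)).length := by
  classical
  set G' : SimpleGraph V := G \ SimpleGraph.fromEdgeSet {s(u, v)} with hG'
  have hbridge : ¬ G'.Reachable u v := by
    have := (SimpleGraph.isAcyclic_iff_forall_adj_isBridge.mp hG.2) huv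
    exact SimpleGraph.isBridge_iff.mp this
  set P : V → Prop := fun z => G'.Reachable v z with hP
  have hPv : P v := SimpleGraph.Reachable.refl v
  have hPu : ¬ P u := fun h => hbridge h.symm
  have hcross : ∀ a b, G.Adj a b → (P a ↔ P b) ∨ (a = u ∧ b = v) ∨ (a = v ∧ b = u) := by
    intro a b hab
    by_cases he : s(a, b) = s(u, v)
    · rw [Sym2.eq_iff] at he
      tauto
    · left
      have hab' : G'.Adj a b := by
        simp only [hG', SimpleGraph.sdiff_adj, SimpleGraph.fromEdgeSet_adj]
        exact ⟨hab, fun h => he h.1⟩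
      exact ⟨fun h => h.trans hab'.reachable, fun h => h.trans hab'.symm.reachable⟩
  -- r is not on v's side: a shortest walk from r to u avoids v
  have hPr : ¬ P r := by
    intro hr
    obtain ⟨p, hp⟩ := (hG.1.preconnected r u).exists_walk_length_eq_dist
    have hvp : v ∉ p.support := by
      intro hv
      have h1 : G.dist r v ≤ (p.takeUntil v hv).length := SimpleGraph.dist_le _
      have h2 : G.dist v u ≤ (p.dropUntil v hv).length := SimpleGraph.dist_le _
      have h3 : (p.takeUntil v hv).length + (p.dropUntil v hv).length = p.length := by
        rw [← SimpleGraph.Walk.length_append, SimpleGraph.Walk.take_spec]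
      have h4 : 1 ≤ G.dist v u := by
        have : G.dist v u = 1 := SimpleGraph.dist_eq_one_iff_adj.mpr huv.symm
        omega
      omega
    -- transfer p to G'
    have hedges : ∀ e ∈ p.edges, e ∈ G'.edgeSet := by
      intro e he2
      have heG : e ∈ G.edgeSet := p.edges_subset_edgeSet he2
      have hne : e ≠ s(u, v) := by
        intro h
        subst h
        exact hvp (p.snd_mem_support_of_mem_edges he2)
      rw [hG', SimpleGraph.edgeSet_sdiff]
      refine Set.mem_diff_of_mem heG ?_
      simp only [SimpleGraph.edgeSet_fromEdgeSet, Set.mem_diff, Set.mem_singleton_iff, not_and]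
      intro hmem
      exact absurd hmem hne
    have hru : G'.Reachable r u := ⟨p.transfer G' hedges⟩
    exact hbridge (hru.symm.trans hr.symm)
  have := tree_walk_key G u v P hcross hPu hPv w
  rw [if_neg hPr] at this
  omega
end
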